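/- arXiv:1912.02759 — 3 statements merged into one kernel-verified Lean document; each statement's English description precedes it below -/
import Mathlib

section
/- Soundness: if ⊢φ, then (α,δ,ω)⊩φ for every game and every play (α,δ,ω)∈P of that game. -/
namespace DutyToWarn

/-- The language Φ: propositional variables, negation, implication,
distributed knowledge `K_C φ`, and second-order blameworthiness `B_C^D φ`. -/
inductive Formula (Agent V : Type) : Type
  | var : V → Formula Agent V
  | neg : Formula Agent V → Formula Agent V
  | imp : Formula Agent V → Formula Agent V → Formula Agent V
  | know : Set Agent → Formula Agent V → Formula Agent V
  | blame : Set Agent → Set Agent → Formula Agent V → Formula Agent V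

variable {Agent V B : Type}

namespace Formula

/-- φ ∨ ψ is defined through ¬ and → in the usual way: ¬φ → ψ. -/
def disj (φ ψ : Formula Agent V) : Formula Agent V := imp (neg φ) ψ

/-- φ ∧ ψ is defined through ¬ and → in the usual way: ¬(φ → ¬ψ). -/
def conj (φ ψ : Formula Agent V) : Formula Agent V := neg (imp φ (neg ψ))

/-- φ ↔ ψ is defined as (φ → ψ) ∧ (ψ → φ). -/
def biimp (φ ψ : Formula Agent V) : Formula Agent V := conj (imp φ ψ) (imp ψ φ)

/-- K̄_C φ abbreviates ¬ K_C ¬ φ. -/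
def dknow (C : Set Agent) (φ : Formula Agent V) : Formula Agent V := neg (know C (neg φ))

end Formula

/-- The Boolean constant ⊥, defined through ¬ and →. -/
def falsum [Inhabited V] : Formula Agent V :=
  Formula.neg (Formula.imp (Formula.var default) (Formula.var default))

/-- The disjunction χ₁ ∨ … ∨ χₙ of a list of formulas; for n = 0 it is ⊥. -/
def bigOr [Inhabited V] : List (Formula Agent V) → Formula Agent V
  | [] => falsum
  | [φ] => φ
  | φ :: ψ :: l => φ.disj (bigOr (ψ :: l))

/-- A propositional valuation: any assignment of truth values to formulas
that respects negation and implication (treating K- and B-formulas as atoms). -/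
def IsPropValuation (v : Formula Agent V → Prop) : Prop :=
  (∀ φ : Formula Agent V, v φ.neg ↔ ¬ v φ) ∧
    ∀ φ ψ : Formula Agent V, v (φ.imp ψ) ↔ (v φ → v ψ)

/-- A propositional tautology in the language Φ. -/
def Tautology (φ : Formula Agent V) : Prop :=
  ∀ v : Formula Agent V → Prop, IsPropValuation v → v φ

/-- ⊢ φ : provability from the axioms using Modus Ponens and Necessitation. -/
inductive Provable : Formula Agent V → Prop
  | taut {φ : Formula Agent V} : Tautology φ → Provable φ
  | truthK {C : Set Agent} {φ : Formula Agent V} :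
      Provable ((Formula.know C φ).imp φ)
  | truthB {C D : Set Agent} {φ : Formula Agent V} :
      Provable ((Formula.blame C D φ).imp φ)
  | distr {C : Set Agent} {φ ψ : Formula Agent V} :
      Provable ((Formula.know C (φ.imp ψ)).imp ((Formula.know C φ).imp (Formula.know C ψ)))
  | negIntro {C : Set Agent} {φ : Formula Agent V} :
      Provable ((Formula.know C φ).neg.imp (Formula.know C (Formula.know C φ).neg))
  | monoK {C E : Set Agent} {φ : Formula Agent V} (h : C ⊆ E) :
      Provable ((Formula.know C φ).imp (Formula.know E φ))
  | monoB {C D E F : Set Agent} {φ : Formula Agent V} (h1 : C ⊆ E) (h2 : D ⊆ F) :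
      Provable ((Formula.blame C D φ).imp (Formula.blame E F φ))
  | noneToAct {C : Set Agent} {φ : Formula Agent V} :
      Provable (Formula.neg (Formula.blame C ∅ φ))
  | jointResp {C D E F : Set Agent} {φ ψ : Formula Agent V} (h : D ∩ F = ∅) :
      Provable (((Formula.dknow C (Formula.blame C D φ)).conj
        (Formula.dknow E (Formula.blame E F ψ))).imp
        ((φ.disj ψ).imp (Formula.blame (C ∪ E) (D ∪ F) (φ.disj ψ))))
  | strictCond {C D : Set Agent} {φ ψ : Formula Agent V} :
      Provable ((Formula.know C (φ.imp ψ)).imp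
        ((Formula.blame C D ψ).imp (φ.imp (Formula.blame C D φ))))
  | introB {C D : Set Agent} {φ : Formula Agent V} :
      Provable ((Formula.blame C D φ).imp (Formula.know C (φ.imp (Formula.blame C D φ))))
  | mp {φ ψ : Formula Agent V} : Provable (φ.imp ψ) → Provable φ → Provable ψ
  | nec {C : Set Agent} {φ : Formula Agent V} : Provable φ → Provable (Formula.know C φ)

/-- X ⊢ φ : provability from the theorems of the system together with the
additional hypotheses X, using only Modus Ponens. -/
inductive ProvableFrom (X : Set (Formula Agent V)) : Formula Agent V → Prop
  | hyp {φ : Formula Agent V} (h : φ ∈ X) : ProvableFrom X φ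
  | thm {φ : Formula Agent V} (h : Provable φ) : ProvableFrom X φ
  | mp {φ ψ : Formula Agent V} (h1 : ProvableFrom X (φ.imp ψ)) (h2 : ProvableFrom X φ) :
      ProvableFrom X ψ

/-- A game (Definition 1). -/
structure Game (Agent V : Type) where
  I : Type
  Δ : Type
  Ω : Type
  sim : Agent → I → I → Prop
  sim_equiv : ∀ a : Agent, Equivalence (sim a)
  P : Set (I × (Agent → Δ) × Ω)
  play_exists : ∀ (α : I) (δ : Agent → Δ), ∃ ω : Ω, (α, δ, ω) ∈ P
  π : V → Set (I × (Agent → Δ) × Ω)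
  π_sub : ∀ p : V, π p ⊆ P

/-- α ∼_C α' : indistinguishability by a coalition. -/
def Game.simC (G : Game Agent V) (C : Set Agent) (α α' : G.I) : Prop :=
  ∀ a ∈ C, G.sim a α α'

/-- Satisfiability (α,δ,ω) ⊩ φ (Definition 2). -/
def Game.Sat (G : Game Agent V) :
    Formula Agent V → (G.I × (Agent → G.Δ) × G.Ω) → Prop
  | Formula.var p, x => x ∈ G.π p
  | Formula.neg φ, x => ¬ G.Sat φ x
  | Formula.imp φ ψ, x => G.Sat φ x → G.Sat ψ x
  | Formula.know C φ, x => ∀ x' ∈ G.P, G.simC C x.1 x'.1 → G.Sat φ x'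
  | Formula.blame C D φ, x => G.Sat φ x ∧
      ∃ s : Agent → G.Δ, ∀ x' ∈ G.P, G.simC C x.1 x'.1 →
        (∀ a ∈ D, s a = x'.2.1 a) → ¬ G.Sat φ x'

/-- A set of formulas is consistent if no contradiction is derivable from it. -/
def Consistent (X : Set (Formula Agent V)) : Prop :=
  ¬ ∃ φ : Formula Agent V, ProvableFrom X φ ∧ ProvableFrom X φ.neg

/-- A maximal consistent set: consistent with no proper consistent extension. -/
def MaxConsistent (X : Set (Formula Agent V)) : Prop :=
  Consistent X ∧ ∀ Y : Set (Formula Agent V), X ⊆ Y → Consistent Y → Y = X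

/-- One step (Cᵢ,bᵢ),Xᵢ of a sequence in the set of outcomes of the canonical game. -/
abbrev Step (Agent V B : Type) : Type := Set Agent × B × Set (Formula Agent V)

/-- Validity of a sequence X₀,(C₁,b₁),X₁,…,(Cₙ,bₙ),Xₙ : each Xᵢ is maximal
consistent and {φ | K_{Cᵢ} φ ∈ X_{i-1}} ⊆ Xᵢ. -/
def ValidSeq (X₀ : Set (Formula Agent V)) : List (Step Agent V B) → Prop
  | [] => True
  | (C, _, X) :: l =>
      MaxConsistent X ∧ (∀ φ : Formula Agent V, Formula.know C φ ∈ X₀ → φ ∈ X) ∧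
        ValidSeq X l

/-- The set Ω of outcomes of the canonical game G(X₀): valid sequences starting at X₀
(the sequence of steps after X₀ is recorded). -/
def COutcome (X₀ : Set (Formula Agent V)) (B : Type) : Type :=
  {l : List (Step Agent V B) // ValidSeq X₀ l}

/-- The last maximal consistent set of a sequence. -/
def hdSeq (X₀ : Set (Formula Agent V)) : List (Step Agent V B) → Set (Formula Agent V)
  | [] => X₀
  | (_, _, X) :: l => hdSeq X l

/-- hd(ω) : the last maximal consistent set of the outcome ω. -/
def chd {X₀ : Set (Formula Agent V)} (ω : COutcome X₀ B) : Set (Formula Agent V) :=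
  hdSeq X₀ ω.1

/-- ω ∼_a ω' in the Tree of Knowledge: all edges along the unique path between
ω and ω' are labeled with agent a, i.e. there is a common ancestor w such that
every edge from w down to ω and from w down to ω' is labeled with a. -/
def csimA {X₀ : Set (Formula Agent V)} (a : Agent) (u v : COutcome X₀ B) : Prop :=
  ∃ w t t' : List (Step Agent V B),
    u.1 = w ++ t ∧ v.1 = w ++ t' ∧ (∀ s ∈ t, a ∈ s.1) ∧ (∀ s ∈ t', a ∈ s.1)

/-- ω ∼_C ω' iff ω ∼_a ω' for each a ∈ C. -/
def csimC {X₀ : Set (Formula Agent V)} (C : Set Agent) (u v : COutcome X₀ B) : Prop :=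
  ∀ a ∈ C, csimA a u v

/-- The relation ∼_𝒜 on outcomes. -/
def crel (X₀ : Set (Formula Agent V)) (B : Type) : COutcome X₀ B → COutcome X₀ B → Prop :=
  csimC (Set.univ : Set Agent)

/-- The set I of initial states of the canonical game: I = Ω/∼_𝒜. -/
def CI (X₀ : Set (Formula Agent V)) (B : Type) : Type :=
  Quot (crel X₀ B)

/-- The equivalence class of an outcome. -/
def ctoI {X₀ : Set (Formula Agent V)} (u : COutcome X₀ B) : CI X₀ B :=
  Quot.mk (crel X₀ B) u

/-- The relation α ∼_C α' on I, induced on representatives. -/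
def IsimC {X₀ : Set (Formula Agent V)} (C : Set Agent) (α α' : CI X₀ B) : Prop :=
  ∃ u v : COutcome X₀ B, ctoI u = α ∧ ctoI v = α' ∧ csimC C u v

/-- The domain of actions of the canonical game: Δ = {(φ,C,ω)}. -/
abbrev CAct (X₀ : Set (Formula Agent V)) (B : Type) : Type :=
  Formula Agent V × Set Agent × COutcome X₀ B

/-- Triples (α, δ, ω) over the canonical game. -/
abbrev CPlay (X₀ : Set (Formula Agent V)) (B : Type) : Type :=
  CI X₀ B × (Agent → CAct X₀ B) × COutcome X₀ B

/-- The set P of plays of the canonical game (Definition 13). -/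
def CP (X₀ : Set (Formula Agent V)) (B : Type) : Set (CPlay X₀ B) :=
  {x | ctoI x.2.2 = x.1 ∧
    ∀ (v : COutcome X₀ B) (C D : Set Agent) (ψ : Formula Agent V),
      Formula.dknow C (Formula.blame C D ψ) ∈ chd v →
      (∀ a ∈ D, x.2.1 a = (ψ, C, v)) →
      csimC C x.2.2 v →
      Formula.neg ψ ∈ chd x.2.2}

/-- π(p) in the canonical game. -/
def Cπ (X₀ : Set (Formula Agent V)) (B : Type) (p : V) : Set (CPlay X₀ B) :=
  {x | x ∈ CP X₀ B ∧ Formula.var p ∈ chd x.2.2}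

/-- Satisfiability in the canonical game G(X₀) (Definition 2 instantiated). -/
def CSat (X₀ : Set (Formula Agent V)) (B : Type) :
    Formula Agent V → CPlay X₀ B → Prop
  | Formula.var p, x => x ∈ Cπ X₀ B p
  | Formula.neg φ, x => ¬ CSat X₀ B φ x
  | Formula.imp φ ψ, x => CSat X₀ B φ x → CSat X₀ B ψ x
  | Formula.know C φ, x => ∀ x' ∈ CP X₀ B, IsimC C x.1 x'.1 → CSat X₀ B φ x'
  | Formula.blame C D φ, x => CSat X₀ B φ x ∧
      ∃ s : Agent → CAct X₀ B, ∀ x' ∈ CP X₀ B, IsimC C x.1 x'.1 →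
        (∀ a ∈ D, s a = x'.2.1 a) → ¬ CSat X₀ B φ x'

/-!
Soundness is proved by induction on derivations. The knowledge axioms hold because each `∼_C`
is an equivalence relation that shrinks as `C` grows. For blameworthiness, all the work is
about action profiles that prevent a formula: such a profile stays preventing for larger
coalitions, in indistinguishable states, and for stronger formulas. For Joint Responsibility,
the profiles of the disjoint coalitions `D` and `F` are merged into one profile of `D ∪ F`.
-/

namespace Game

variable (G : Game Agent V)

theorem simC_refl (C : Set Agent) (α : G.I) : G.simC C α α :=
  fun a _ => (G.sim_equiv a).refl α

variable {G}

theorem simC_symm {C : Set Agent} {α β : G.I} (h : G.simC C α β) : G.simC C β α :=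
  fun a ha => (G.sim_equiv a).symm (h a ha)

theorem simC_trans {C : Set Agent} {α β γ : G.I} (h₁ : G.simC C α β) (h₂ : G.simC C β γ) :
    G.simC C α γ :=
  fun a ha => (G.sim_equiv a).trans (h₁ a ha) (h₂ a ha)

theorem simC_of_subset {C E : Set Agent} (h : C ⊆ E) {α β : G.I} (hs : G.simC E α β) :
    G.simC C α β :=
  fun a ha => hs a (h ha)

theorem sat_disj {φ ψ : Formula Agent V} {x : G.I × (Agent → G.Δ) × G.Ω} :
    G.Sat (φ.disj ψ) x ↔ G.Sat φ x ∨ G.Sat ψ x :=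
  or_iff_not_imp_left.symm

theorem sat_conj {φ ψ : Formula Agent V} {x : G.I × (Agent → G.Δ) × G.Ω} :
    G.Sat (φ.conj ψ) x ↔ G.Sat φ x ∧ G.Sat ψ x := by
  simp only [Formula.conj, Sat, Classical.not_imp, not_not]

/-- The action profile `s` of coalition `D` prevents `φ` in every initial state that `C`
cannot distinguish from `α`: the second clause in the semantics of `B_C^D φ`. -/
def Prevents (G : Game Agent V) (C D : Set Agent) (α : G.I) (s : Agent → G.Δ)
    (φ : Formula Agent V) : Prop :=
  ∀ x' ∈ G.P, G.simC C α x'.1 → (∀ a ∈ D, s a = x'.2.1 a) → ¬ G.Sat φ x'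

namespace Prevents

variable {C D E F : Set Agent} {α β : G.I} {s : Agent → G.Δ} {φ ψ : Formula Agent V}

theorem mono (hC : C ⊆ E) (hD : D ⊆ F) (h : G.Prevents C D α s φ) : G.Prevents E F α s φ :=
  fun x' hx' hsim hs => h x' hx' (simC_of_subset hC hsim) fun a ha => hs a (hD ha)

theorem of_simC (hαβ : G.simC C α β) (h : G.Prevents C D α s φ) : G.Prevents C D β s φ :=
  fun x' hx' hsim => h x' hx' (simC_trans hαβ hsim)

theorem of_imp (himp : ∀ x ∈ G.P, G.simC C α x.1 → G.Sat φ x → G.Sat ψ x)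
    (h : G.Prevents C D α s ψ) : G.Prevents C D α s φ :=
  fun x' hx' hsim hs hφ => h x' hx' hsim hs (himp x' hx' hsim hφ)

theorem not_of_sat {x : G.I × (Agent → G.Δ) × G.Ω} (hx : x ∈ G.P) (hφ : G.Sat φ x) :
    ¬ G.Prevents C ∅ x.1 s φ :=
  fun h => h x hx (G.simC_refl C x.1) (fun _ ha => absurd ha (Set.notMem_empty _)) hφ

/-- Disjoint coalitions can play their preventing profiles simultaneously. -/
theorem disj [DecidablePred (· ∈ D)] {t : Agent → G.Δ} (hDF : D ∩ F = ∅)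
    (hs : G.Prevents C D α s φ) (ht : G.Prevents E F α t ψ) :
    G.Prevents (C ∪ E) (D ∪ F) α (D.piecewise s t) (φ.disj ψ) := by
  intro x' hx' hsim hst hφψ
  have hsD : ∀ a ∈ D, s a = x'.2.1 a := fun a ha => by
    simpa only [Set.piecewise_eq_of_mem _ _ _ ha] using hst a (Or.inl ha)
  have htF : ∀ a ∈ F, t a = x'.2.1 a := fun a ha => by
    have haD : a ∉ D := fun haD => Set.notMem_empty a (hDF ▸ ⟨haD, ha⟩)
    simpa only [Set.piecewise_eq_of_notMem _ _ _ haD] using hst a (Or.inr ha)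
  rcases sat_disj.mp hφψ with hφ | hψ
  · exact hs x' hx' (simC_of_subset Set.subset_union_left hsim) hsD hφ
  · exact ht x' hx' (simC_of_subset Set.subset_union_right hsim) htF hψ

end Prevents

theorem exists_prevents_of_sat_dknow_blame {C D : Set Agent} {φ : Formula Agent V}
    {x : G.I × (Agent → G.Δ) × G.Ω} (h : G.Sat (.dknow C (.blame C D φ)) x) :
    ∃ s, G.Prevents C D x.1 s φ := by
  simp only [Formula.dknow, Sat, not_forall, not_not] at h
  obtain ⟨x', -, hsim, -, s, hs⟩ := h
  exact ⟨s, Prevents.of_simC (simC_symm hsim) hs⟩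

end Game

/-- Soundness: if ⊢ φ, then (α,δ,ω) ⊩ φ for every game and every play. -/
theorem soundness {Agent V : Type} (φ : Formula Agent V) (h : Provable φ) :
    ∀ (G : Game Agent V) (x : G.I × (Agent → G.Δ) × G.Ω), x ∈ G.P → G.Sat φ x := by
  induction h with
  | taut ht => exact fun G x _ => ht (G.Sat · x) ⟨fun _ => Iff.rfl, fun _ _ => Iff.rfl⟩
  | truthK => exact fun G x hx hK => hK x hx (G.simC_refl _ _)
  | truthB => exact fun G x _ hB => hB.1
  | distr => exact fun G x _ h₁ h₂ x' hx' hsim => h₁ x' hx' hsim (h₂ x' hx' hsim)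
  | negIntro =>
    exact fun G x _ hn x' _ hsim hK =>
      hn fun y hy hsy => hK y hy (Game.simC_trans (Game.simC_symm hsim) hsy)
  | monoK hCE => exact fun G x _ hK x' hx' hsim => hK x' hx' (Game.simC_of_subset hCE hsim)
  | monoB hCE hDF => exact fun G x _ ⟨hφ, s, hs⟩ => ⟨hφ, s, Game.Prevents.mono hCE hDF hs⟩
  | noneToAct => exact fun G x hx ⟨hφ, s, hs⟩ => Game.Prevents.not_of_sat hx hφ hs
  | jointResp hDF =>
    intro G x _ hconj hφψ
    obtain ⟨hC, hE⟩ := Game.sat_conj.mp hconj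
    obtain ⟨s, hs⟩ := Game.exists_prevents_of_sat_dknow_blame hC
    obtain ⟨t, ht⟩ := Game.exists_prevents_of_sat_dknow_blame hE
    classical
    exact ⟨hφψ, _, Game.Prevents.disj hDF hs ht⟩
  | strictCond => exact fun G x _ hK ⟨_, s, hs⟩ hφ => ⟨hφ, s, Game.Prevents.of_imp hK hs⟩
  | introB => exact fun G x _ ⟨_, s, hs⟩ y _ hsim hφ => ⟨hφ, s, Game.Prevents.of_simC hsim hs⟩
  | mp _ _ ih₁ ih₂ => exact fun G x hx => ih₁ G x hx (ih₂ G x hx)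
  | nec _ ih => exact fun G x _ x' hx' _ => ih G x' hx'

end DutyToWarn
end

section
/- In the canonical game G(X₀), for any outcomes ω, ω' ∈ Ω with ω ∼_C ω' and any formula φ of Φ: K̄_C φ ∈ hd(ω) if and only if K̄_C φ ∈ hd(ω'). -/
namespace DutyToWarn

variable {Agent V B : Type}

/-!
Two outcomes with `ω ∼_C ω'` have a common ancestor (their longest common prefix) from which
every edge down to `ω` and down to `ω'` is labelled by every agent of `C`. Along an edge labelled
by a superset of `C` the canonical accessibility relation for `K_C` holds, and by positive and
negative introspection a maximal consistent set and its `K_C`-successor contain the same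
formulas `K_C ψ`, hence the same formulas `K̄_C φ`.
-/

theorem _root_.List.suffix_of_append_eq_append_of_prefix {α : Type*} {w w' t t' : List α}
    (h : w' ++ t' = w ++ t) (hw : w' <+: w) : t <:+ t' := by
  obtain ⟨r, rfl⟩ := hw
  rw [List.append_assoc] at h
  exact ⟨r, (List.append_cancel_left h).symm⟩

theorem _root_.List.exists_longest_common_prefix {α : Type*} (u v : List α) :
    ∃ w, w <+: u ∧ w <+: v ∧ ∀ w', w' <+: u → w' <+: v → w' <+: w := by
  induction u generalizing v with
  | nil => exact ⟨[], List.nil_prefix, List.nil_prefix, fun w' hu _ => hu⟩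
  | cons a u ih =>
    by_cases hv : ∃ v', v = a :: v'
    · obtain ⟨v', rfl⟩ := hv
      obtain ⟨w, hwu, hwv, hmax⟩ := ih v'
      refine ⟨a :: w, List.cons_prefix_cons.2 ⟨rfl, hwu⟩, List.cons_prefix_cons.2 ⟨rfl, hwv⟩, ?_⟩
      rintro (_ | ⟨c, w'⟩) hw'u hw'v
      · exact List.nil_prefix
      · rw [List.cons_prefix_cons] at hw'u hw'v ⊢
        exact ⟨hw'u.1, hmax w' hw'u.2 hw'v.2⟩
    · refine ⟨[], List.nil_prefix, List.nil_prefix, ?_⟩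
      rintro (_ | ⟨c, w'⟩) hw'u ⟨r, rfl⟩
      · exact List.nil_prefix
      · obtain ⟨rfl, -⟩ := List.cons_prefix_cons.1 hw'u
        exact absurd ⟨w' ++ r, rfl⟩ hv

theorem _root_.List.exists_common_prefix_of_forall {ι α : Type*} {I : Set ι} {P : ι → α → Prop}
    {u v : List α}
    (h : ∀ i ∈ I, ∃ w t t', u = w ++ t ∧ v = w ++ t' ∧ (∀ s ∈ t, P i s) ∧ (∀ s ∈ t', P i s)) :
    ∃ w t t', u = w ++ t ∧ v = w ++ t' ∧ (∀ s ∈ t, ∀ i ∈ I, P i s) ∧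
      (∀ s ∈ t', ∀ i ∈ I, P i s) := by
  obtain ⟨w, ⟨t, rfl⟩, ⟨t', rfl⟩, hmax⟩ := u.exists_longest_common_prefix v
  have suffixes : ∀ i ∈ I, ∃ ti ti', t <:+ ti ∧ t' <:+ ti' ∧ (∀ s ∈ ti, P i s) ∧
      ∀ s ∈ ti', P i s := by
    intro i hi
    obtain ⟨wi, ti, ti', hu, hv, hti, hti'⟩ := h i hi
    have hwi : wi <+: w := hmax wi ⟨ti, hu.symm⟩ ⟨ti', hv.symm⟩
    exact ⟨ti, ti', List.suffix_of_append_eq_append_of_prefix hu.symm hwi,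
      List.suffix_of_append_eq_append_of_prefix hv.symm hwi, hti, hti'⟩
  refine ⟨w, t, t', rfl, rfl, fun s hs i hi => ?_, fun s hs i hi => ?_⟩
  · obtain ⟨ti, -, ht, -, hti, -⟩ := suffixes i hi
    exact hti s (ht.subset hs)
  · obtain ⟨-, ti', -, ht', -, hti'⟩ := suffixes i hi
    exact hti' s (ht'.subset hs)

theorem ProvableFrom.mp_taut {X : Set (Formula Agent V)} {φ ψ : Formula Agent V}
    (ht : Tautology (φ.imp ψ)) (h : ProvableFrom X φ) : ProvableFrom X ψ :=
  .mp (.thm (.taut ht)) h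

theorem ProvableFrom.mp_taut₂ {X : Set (Formula Agent V)} {φ ψ χ : Formula Agent V}
    (ht : Tautology (φ.imp (ψ.imp χ))) (hφ : ProvableFrom X φ) (hψ : ProvableFrom X ψ) :
    ProvableFrom X χ :=
  .mp (hφ.mp_taut ht) hψ

theorem ProvableFrom.deduction {X : Set (Formula Agent V)} {φ ψ : Formula Agent V}
    (h : ProvableFrom (insert φ X) ψ) : ProvableFrom X (φ.imp ψ) := by
  induction h with
  | hyp hmem =>
    rcases hmem with rfl | hX
    · exact .thm (.taut fun v ⟨_, hi⟩ => by simp only [hi]; tauto)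
    · exact (ProvableFrom.hyp hX).mp_taut fun v ⟨_, hi⟩ => by simp only [hi]; tauto
  | thm h => exact (ProvableFrom.thm h).mp_taut fun v ⟨_, hi⟩ => by simp only [hi]; tauto
  | mp _ _ ih₁ ih₂ => exact ih₁.mp_taut₂ (fun v ⟨_, hi⟩ => by simp only [hi]; tauto) ih₂

theorem Provable.imp_trans {φ ψ χ : Formula Agent V}
    (h₁ : Provable (φ.imp ψ)) (h₂ : Provable (ψ.imp χ)) : Provable (φ.imp χ) :=
  .mp (.mp (.taut fun v ⟨_, hi⟩ => by simp only [hi]; tauto) h₁) h₂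

theorem Provable.imp_neg_comm {φ ψ : Formula Agent V}
    (h : Provable (φ.imp ψ.neg)) : Provable (ψ.imp φ.neg) :=
  .mp (.taut fun v ⟨hn, hi⟩ => by simp only [hi, hn]; tauto) h

theorem Provable.neg_imp_comm {φ ψ : Formula Agent V}
    (h : Provable (φ.neg.imp ψ)) : Provable (ψ.neg.imp φ) :=
  .mp (.taut fun v ⟨hn, hi⟩ => by simp only [hi, hn]; tauto) h

/-- Positive introspection, derived as in S5: `K ψ → ¬K¬K ψ` by truth, then negative
introspection twice. -/
theorem Provable.know_imp_know_know {C : Set Agent} {ψ : Formula Agent V} :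
    Provable ((Formula.know C ψ).imp (Formula.know C (Formula.know C ψ))) := by
  have know_imp : Provable ((Formula.know C ψ).imp (Formula.know C (Formula.know C ψ).neg).neg) :=
    Provable.truthK.imp_neg_comm
  have not_know_not_know_imp_know :
      Provable ((Formula.know C (Formula.know C ψ).neg).neg.imp (Formula.know C ψ)) :=
    Provable.negIntro.neg_imp_comm
  exact (know_imp.imp_trans .negIntro).imp_trans (.mp .distr (.nec not_know_not_know_imp_know))

namespace MaxConsistent

variable {X Y : Set (Formula Agent V)} {φ ψ : Formula Agent V}

theorem mem_of_consistent_insert (hX : MaxConsistent X) (h : Consistent (insert φ X)) :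
    φ ∈ X :=
  hX.2 _ (Set.subset_insert _ _) h ▸ Set.mem_insert _ _

theorem mem_of_provableFrom (hX : MaxConsistent X) (h : ProvableFrom X φ) : φ ∈ X :=
  hX.mem_of_consistent_insert fun ⟨_, h₁, h₂⟩ => hX.1 ⟨_, h₁.deduction.mp h, h₂.deduction.mp h⟩

theorem mem_of_provable (hX : MaxConsistent X) (h : Provable φ) : φ ∈ X :=
  hX.mem_of_provableFrom (.thm h)

theorem mp_mem (hX : MaxConsistent X) (h : φ.imp ψ ∈ X) (hφ : φ ∈ X) : ψ ∈ X :=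
  hX.mem_of_provableFrom (.mp (.hyp h) (.hyp hφ))

theorem neg_mem_iff (hX : MaxConsistent X) : φ.neg ∈ X ↔ φ ∉ X := by
  refine ⟨fun hn h => hX.1 ⟨φ, .hyp h, .hyp hn⟩, fun hφ => hX.mem_of_consistent_insert ?_⟩
  rintro ⟨ψ, h₁, h₂⟩
  refine hφ (hX.mem_of_provableFrom (h₁.deduction.mp_taut₂ ?_ h₂.deduction))
  exact fun v ⟨hn, hi⟩ => by simp only [hi, hn]; tauto

end MaxConsistent

def Accessible (C : Set Agent) (X Y : Set (Formula Agent V)) : Prop :=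
  ∀ φ, Formula.know C φ ∈ X → φ ∈ Y

theorem Accessible.anti {C C' : Set Agent} {X Y : Set (Formula Agent V)}
    (hX : MaxConsistent X) (h : Accessible C' X Y) (hC : C ⊆ C') : Accessible C X Y :=
  fun _ hφ => h _ (hX.mp_mem (hX.mem_of_provable (.monoK hC)) hφ)

theorem Accessible.know_mem_iff {C : Set Agent} {X Y : Set (Formula Agent V)}
    (hX : MaxConsistent X) (hY : MaxConsistent Y) (h : Accessible C X Y) (ψ : Formula Agent V) :
    Formula.know C ψ ∈ X ↔ Formula.know C ψ ∈ Y := by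
  refine ⟨fun hK => h _ (hX.mp_mem (hX.mem_of_provable .know_imp_know_know) hK), fun hK => ?_⟩
  by_contra hnK
  have : Formula.know C (Formula.know C ψ).neg ∈ X :=
    hX.mp_mem (hX.mem_of_provable .negIntro) (hX.neg_mem_iff.2 hnK)
  exact hY.neg_mem_iff.1 (h _ this) hK

theorem Accessible.dknow_mem_iff {C : Set Agent} {X Y : Set (Formula Agent V)}
    (hX : MaxConsistent X) (hY : MaxConsistent Y) (h : Accessible C X Y) (φ : Formula Agent V) :
    Formula.dknow C φ ∈ X ↔ Formula.dknow C φ ∈ Y := by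
  rw [Formula.dknow, hX.neg_mem_iff, hY.neg_mem_iff, h.know_mem_iff hX hY]

theorem hdSeq_append (X : Set (Formula Agent V)) (w t : List (Step Agent V B)) :
    hdSeq X (w ++ t) = hdSeq (hdSeq X w) t := by
  induction w generalizing X with
  | nil => rfl
  | cons s w ih => exact ih s.2.2

theorem ValidSeq.of_append {X : Set (Formula Agent V)} {w t : List (Step Agent V B)}
    (h : ValidSeq X (w ++ t)) : ValidSeq X w ∧ ValidSeq (hdSeq X w) t := by
  induction w generalizing X with
  | nil => exact ⟨trivial, h⟩
  | cons s w ih =>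
    obtain ⟨hY, hacc, hrest⟩ := h
    exact ⟨⟨hY, hacc, (ih hrest).1⟩, (ih hrest).2⟩

theorem MaxConsistent.hdSeq {X : Set (Formula Agent V)} {t : List (Step Agent V B)}
    (hX : MaxConsistent X) (h : ValidSeq X t) : MaxConsistent (hdSeq X t) := by
  induction t generalizing X with
  | nil => exact hX
  | cons s t ih => exact ih h.1 h.2.2

theorem dknow_mem_hdSeq_iff {C : Set Agent} {X : Set (Formula Agent V)}
    {t : List (Step Agent V B)} (hX : MaxConsistent X) (ht : ValidSeq X t)
    (hC : ∀ s ∈ t, C ⊆ s.1) (φ : Formula Agent V) :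
    Formula.dknow C φ ∈ hdSeq X t ↔ Formula.dknow C φ ∈ X := by
  induction t generalizing X with
  | nil => rfl
  | cons s t ih =>
    obtain ⟨hY, hacc, hrest⟩ := ht
    have hacc : Accessible C X s.2.2 := Accessible.anti hX hacc (hC s List.mem_cons_self)
    exact (ih hY hrest (fun s' hs' => hC s' (List.mem_cons_of_mem _ hs'))).trans
      (hacc.dknow_mem_iff hX hY φ).symm

theorem dknow_mem_hdSeq_append_iff {C : Set Agent} {X : Set (Formula Agent V)}
    {w t : List (Step Agent V B)} (hX : MaxConsistent X) (h : ValidSeq X (w ++ t))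
    (hC : ∀ s ∈ t, C ⊆ s.1) (φ : Formula Agent V) :
    Formula.dknow C φ ∈ hdSeq X (w ++ t) ↔ Formula.dknow C φ ∈ hdSeq X w := by
  obtain ⟨hw, ht⟩ := h.of_append
  rw [hdSeq_append]
  exact dknow_mem_hdSeq_iff (hX.hdSeq hw) ht hC φ

theorem csimC.exists_common_ancestor {X₀ : Set (Formula Agent V)} {C : Set Agent}
    {u v : COutcome X₀ B} (h : csimC C u v) :
    ∃ w t t', u.1 = w ++ t ∧ v.1 = w ++ t' ∧ (∀ s ∈ t, C ⊆ s.1) ∧ ∀ s ∈ t', C ⊆ s.1 :=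
  List.exists_common_prefix_of_forall (P := fun a (s : Step Agent V B) => a ∈ s.1) h

theorem transport_dknow_general {Agent V B : Type}
    (X₀ : Set (Formula Agent V)) (hX₀ : MaxConsistent X₀)
    (C : Set Agent) (ω ω' : COutcome X₀ B) (h : csimC C ω ω')
    (φ : Formula Agent V) :
    Formula.dknow C φ ∈ chd ω ↔ Formula.dknow C φ ∈ chd ω' := by
  obtain ⟨w, t, t', hω, hω', ht, ht'⟩ := h.exists_common_ancestor
  have hv : ValidSeq X₀ (w ++ t) := hω ▸ ω.2
  have hv' : ValidSeq X₀ (w ++ t') := hω' ▸ ω'.2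
  rw [chd, chd, hω, hω', dknow_mem_hdSeq_append_iff hX₀ hv ht,
    dknow_mem_hdSeq_append_iff hX₀ hv' ht']

/-- Corollary 1: in the canonical game G(X₀),
    if ω ∼_C ω' then K̄_C φ ∈ hd(ω) iff K̄_C φ ∈ hd(ω'). -/
theorem transport_dknow {Agent V B : Type}
    (hB : Cardinal.mk Agent < Cardinal.mk B)
    (X₀ : Set (Formula Agent V)) (hX₀ : MaxConsistent X₀)
    (C : Set Agent) (ω ω' : COutcome X₀ B) (h : csimC C ω ω')
    (φ : Formula Agent V) :
    Formula.dknow C φ ∈ chd ω ↔ Formula.dknow C φ ∈ chd ω' :=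
  transport_dknow_general X₀ hX₀ C ω ω' h φ

end DutyToWarn
end

section
/- In the canonical game G(X₀): for any play (α,δ,ω)∈P and any formula ¬K_C φ ∈ hd(ω), there exists a play (α',δ',ω')∈P such that α∼_C α' and ¬φ∈hd(ω'). -/
namespace DutyToWarn

variable {Agent V B : Type}

/-! A canonical-model argument. Since `¬K_C φ` lies in the maximal consistent set `hd(ω)`,
the set `{ψ | K_C ψ ∈ hd(ω)} ∪ {¬φ}` is consistent, and Lindenbaum's lemma extends it to a
maximal consistent `X'`. Appending the edge `(C, b), X'` to `ω` gives a child `ω'` with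
`ω ∼_C ω'`. The play at `ω'` in which every agent acts `(φ, E, w)` is in `P`: a formula
`K̄_C B_C^D ψ` cannot lie in a consistent set when `D = ∅` (None to Act), and otherwise the
actions force `ψ = φ`, whose negation lies in `hd(ω') = X'`. -/

namespace ProvableFrom

variable {X Y : Set (Formula Agent V)} {φ ψ : Formula Agent V}

theorem mono (hXY : X ⊆ Y) (h : ProvableFrom X φ) : ProvableFrom Y φ := by
  induction h with
  | hyp h => exact hyp (hXY h)
  | thm h => exact thm h
  | mp _ _ ih₁ ih₂ => exact mp ih₁ ih₂

theorem taut (h : Tautology φ) : ProvableFrom X φ :=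
  thm (Provable.taut h)

theorem mp_taut_s17 (ht : Tautology (φ.imp ψ)) (h : ProvableFrom X φ) : ProvableFrom X ψ :=
  mp (taut ht) h

theorem imp_intro (h : ProvableFrom (insert φ X) ψ) : ProvableFrom X (φ.imp ψ) := by
  have weaken : ∀ {χ}, ProvableFrom X χ → ProvableFrom X (φ.imp χ) :=
    mp_taut_s17 fun v hv => by simp only [hv.2]; tauto
  induction h with
  | hyp h =>
    rcases h with rfl | h
    · exact taut fun v hv => by simp only [hv.2]; tauto
    · exact weaken (hyp h)
  | thm h => exact weaken (thm h)
  | mp _ _ ih₁ ih₂ => exact mp (mp_taut_s17 (fun v hv => by simp only [hv.2]; tauto) ih₁) ih₂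

theorem exists_finite (h : ProvableFrom X φ) : ∃ s ⊆ X, s.Finite ∧ ProvableFrom s φ := by
  induction h with
  | @hyp χ h => exact ⟨{χ}, by simpa using h, Set.finite_singleton χ, hyp rfl⟩
  | thm h => exact ⟨∅, Set.empty_subset X, Set.finite_empty, thm h⟩
  | mp _ _ ih₁ ih₂ =>
    obtain ⟨s₁, hs₁X, hs₁, h₁⟩ := ih₁
    obtain ⟨s₂, hs₂X, hs₂, h₂⟩ := ih₂
    exact ⟨s₁ ∪ s₂, Set.union_subset hs₁X hs₂X, hs₁.union hs₂,
      mp (h₁.mono Set.subset_union_left) (h₂.mono Set.subset_union_right)⟩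

theorem know {C : Set Agent} (h : ProvableFrom {ψ | Formula.know C ψ ∈ X} φ) :
    ProvableFrom X (Formula.know C φ) := by
  induction h with
  | hyp h => exact hyp h
  | thm h => exact thm (Provable.nec h)
  | mp _ _ ih₁ ih₂ => exact mp (mp (thm Provable.distr) ih₁) ih₂

end ProvableFrom

section Consistency

variable {X : Set (Formula Agent V)} {φ : Formula Agent V}

theorem consistent_insert_neg (h : ¬ ProvableFrom X φ) : Consistent (insert φ.neg X) := by
  rintro ⟨χ, hχ, hnχ⟩
  have hφ : ProvableFrom (insert φ.neg X) φ :=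
    ProvableFrom.mp (ProvableFrom.mp_taut_s17 (fun v hv => by simp only [hv.1, hv.2]; tauto) hχ) hnχ
  exact h (ProvableFrom.mp_taut_s17 (fun v hv => by simp only [hv.1, hv.2]; tauto) hφ.imp_intro)

theorem Consistent.not_provableFrom_known {C : Set Agent} (hX : Consistent X)
    (h : (Formula.know C φ).neg ∈ X) : ¬ ProvableFrom {ψ | Formula.know C ψ ∈ X} φ :=
  fun hφ => hX ⟨_, hφ.know, ProvableFrom.hyp h⟩

theorem Consistent.dknow_blame_empty_notMem {C : Set Agent} (hX : Consistent X) :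
    Formula.dknow C (Formula.blame C ∅ φ) ∉ X :=
  fun h => hX ⟨_, ProvableFrom.thm (Provable.nec Provable.noneToAct), ProvableFrom.hyp h⟩

theorem consistent_sUnion_of_isChain {c : Set (Set (Formula Agent V))}
    (hcons : ∀ X ∈ c, Consistent X) (hc : IsChain (· ⊆ ·) c) (hne : c.Nonempty) :
    Consistent (⋃₀ c) := by
  rintro ⟨χ, hχ, hnχ⟩
  obtain ⟨s₁, hs₁c, hs₁, h₁⟩ := hχ.exists_finite
  obtain ⟨s₂, hs₂c, hs₂, h₂⟩ := hnχ.exists_finite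
  obtain ⟨X, hXc, hsX⟩ := hc.directedOn.exists_mem_subset_of_finite_of_subset_sUnion hne
    (hs₁.union hs₂) (Set.union_subset hs₁c hs₂c)
  exact hcons X hXc ⟨χ, h₁.mono (Set.subset_union_left.trans hsX),
    h₂.mono (Set.subset_union_right.trans hsX)⟩

theorem Consistent.exists_maxConsistent_superset (hX : Consistent X) :
    ∃ Y, X ⊆ Y ∧ MaxConsistent Y := by
  obtain ⟨Y, hXY, hY⟩ := zorn_subset_nonempty {Y | Consistent Y}
    (fun c hc hchain hne => ⟨⋃₀ c, consistent_sUnion_of_isChain hc hchain hne,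
      fun _ => Set.subset_sUnion_of_mem⟩) X hX
  exact ⟨Y, hXY, hY.1, fun Z hYZ hZ => (hY.2 hZ hYZ).antisymm hYZ⟩

end Consistency

section CanonicalGame

variable {X₀ : Set (Formula Agent V)}

theorem maxConsistent_hdSeq (hX₀ : MaxConsistent X₀) {l : List (Step Agent V B)}
    (hl : ValidSeq X₀ l) : MaxConsistent (hdSeq X₀ l) := by
  induction l generalizing X₀ with
  | nil => exact hX₀
  | cons s l ih => exact ih hl.1 hl.2.2

theorem hdSeq_append_singleton (l : List (Step Agent V B)) (s : Step Agent V B) :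
    hdSeq X₀ (l ++ [s]) = s.2.2 := by
  induction l generalizing X₀ with
  | nil => rfl
  | cons t l ih => exact ih

theorem validSeq_append_singleton {l : List (Step Agent V B)} (hl : ValidSeq X₀ l)
    {C : Set Agent} (b : B) {X : Set (Formula Agent V)} (hX : MaxConsistent X)
    (hCX : ∀ ψ, Formula.know C ψ ∈ hdSeq X₀ l → ψ ∈ X) :
    ValidSeq X₀ (l ++ [(C, b, X)]) := by
  induction l generalizing X₀ with
  | nil => exact ⟨hX, hCX, trivial⟩
  | cons t l ih => exact ⟨hl.1, hl.2.1, ih hl.2.2 hCX⟩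

def COutcome.child (ω : COutcome X₀ B) (C : Set Agent) (b : B) (X : Set (Formula Agent V))
    (hX : MaxConsistent X) (hCX : ∀ ψ, Formula.know C ψ ∈ chd ω → ψ ∈ X) : COutcome X₀ B :=
  ⟨ω.1 ++ [(C, b, X)], validSeq_append_singleton ω.2 b hX hCX⟩

variable {ω : COutcome X₀ B} {C : Set Agent} {b : B} {X : Set (Formula Agent V)}
  {hX : MaxConsistent X} {hCX : ∀ ψ, Formula.know C ψ ∈ chd ω → ψ ∈ X}

theorem COutcome.chd_child : chd (ω.child C b X hX hCX) = X :=
  hdSeq_append_singleton ω.1 (C, b, X)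

theorem COutcome.csimC_child : csimC C ω (ω.child C b X hX hCX) :=
  fun _ ha => ⟨ω.1, [], [(C, b, X)], (List.append_nil _).symm, rfl, by simp, by simpa using ha⟩

theorem const_mem_CP (hX₀ : MaxConsistent X₀) {ω : COutcome X₀ B} {φ : Formula Agent V}
    (E : Set Agent) (w : COutcome X₀ B) (hφ : φ.neg ∈ chd ω) :
    (ctoI ω, fun _ => (φ, E, w), ω) ∈ CP X₀ B := by
  refine ⟨rfl, fun v C D ψ hv hD _ => ?_⟩
  obtain rfl | ⟨a, ha⟩ := D.eq_empty_or_nonempty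
  · exact absurd hv (maxConsistent_hdSeq hX₀ v.2).1.dknow_blame_empty_notMem
  · obtain rfl : φ = ψ := congrArg Prod.fst (hD a ha)
    exact hφ

end CanonicalGame

/-- Lemma 18: in the canonical game G(X₀), for any play (α,δ,ω) ∈ P and
    any formula ¬K_C φ ∈ hd(ω), there is a play (α',δ',ω') ∈ P such that α ∼_C α' and
    ¬φ ∈ hd(ω'). -/
theorem N_child_exists {Agent V B : Type}
    (hB : Cardinal.mk Agent < Cardinal.mk B)
    (X₀ : Set (Formula Agent V)) (hX₀ : MaxConsistent X₀)
    (x : CPlay X₀ B) (hx : x ∈ CP X₀ B) (C : Set Agent) (φ : Formula Agent V)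
    (h : Formula.neg (Formula.know C φ) ∈ chd x.2.2) :
    ∃ x' ∈ CP X₀ B, IsimC C x.1 x'.1 ∧ Formula.neg φ ∈ chd x'.2.2 := by
  obtain ⟨b⟩ : Nonempty B := Cardinal.mk_ne_zero_iff.1 (ne_bot_of_gt hB)
  have hcons : Consistent (insert φ.neg {ψ | Formula.know C ψ ∈ chd x.2.2}) :=
    consistent_insert_neg ((maxConsistent_hdSeq hX₀ x.2.2.2).1.not_provableFrom_known h)
  obtain ⟨X', hX'sub, hX'⟩ := hcons.exists_maxConsistent_superset
  set ω' := x.2.2.child C b X' hX' fun ψ hψ => hX'sub (Set.mem_insert_of_mem _ hψ)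
  have hφ : φ.neg ∈ chd ω' := COutcome.chd_child ▸ hX'sub (Set.mem_insert _ _)
  exact ⟨_, const_mem_CP hX₀ ∅ ω' hφ, ⟨x.2.2, ω', hx.1, rfl, COutcome.csimC_child⟩, hφ⟩

end DutyToWarn
end
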